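/- Let b, c, e, f be integers with be ≠ 0, bf ≠ ec, and b ∣ c. Then for every infinite set A of positive integers and every K, there exists a positive integer n with |d(A, bn+c) − d(A, en+f)| ≥ K; that is, limsup_{n→∞} |d(A, bn+c) − d(A, en+f)| = ∞. -/

import Mathlib

/-!
Write `c = b c'` and `D = f - e c' ≠ 0`. Pick `K + 2|D|` elements of `A` with lcm `L`. For
`n = L q - c'` they all divide `b n + c = b L q`, while `e n + f = e L q + D`. After dividing
`e L` and `D` by their gcd `g`, Dirichlet's theorem supplies `q` with `|e L q + D| = g p` for a
prime `p`, a number with at most `2 g ≤ 2 |D|` divisors.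
-/

/-- `countDiv A m` is the number of elements `a ∈ A` with `a ∣ m`. -/
noncomputable def countDiv (A : Set ℕ) (m : ℤ) : ℕ := {a ∈ A | (a : ℤ) ∣ m}.ncard

lemma setOf_mem_dvd_subset_divisors (A : Set ℕ) {m : ℤ} (hm : m ≠ 0) :
    {a ∈ A | (a : ℤ) ∣ m} ⊆ m.natAbs.divisors := fun _ ha =>
  Nat.mem_divisors.2 ⟨Int.natCast_dvd.1 ha.2, Int.natAbs_ne_zero.2 hm⟩

lemma countDiv_le_card_divisors (A : Set ℕ) {m : ℤ} (hm : m ≠ 0) :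
    countDiv A m ≤ m.natAbs.divisors.card :=
  (Set.ncard_le_ncard (setOf_mem_dvd_subset_divisors A hm) (Finset.finite_toSet _)).trans_eq
    (Set.ncard_coe_finset _)

lemma card_le_countDiv {A : Set ℕ} {S : Finset ℕ} (hSA : ↑S ⊆ A) {m : ℤ} (hm : m ≠ 0)
    (hSm : ∀ a ∈ S, (a : ℤ) ∣ m) : S.card ≤ countDiv A m := by
  rw [← Set.ncard_coe_finset]
  exact Set.ncard_le_ncard (fun a ha => ⟨hSA ha, hSm a ha⟩)
    ((Finset.finite_toSet _).subset (setOf_mem_dvd_subset_divisors A hm))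

lemma Nat.card_divisors_prime_mul_le {p : ℕ} (hp : p.Prime) (n : ℕ) :
    (p * n).divisors.card ≤ 2 * n := by
  calc (p * n).divisors.card ≤ p.divisors.card * n.divisors.card := by
        rw [Nat.divisors_mul]; exact Finset.card_mul_le
    _ ≤ 2 * n := by
        rw [hp.divisors, Finset.card_pair hp.one_lt.ne]
        exact Nat.mul_le_mul_left 2 (Nat.card_divisors_le_self n)

lemma exists_prime_eq_mul_add_of_pos {u D : ℤ} (hu : 0 < u) (hcop : IsCoprime u D) (B : ℕ) :
    ∃ q : ℤ, B < q ∧ ∃ p : ℕ, p.Prime ∧ u * q + D = p := by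
  lift u to ℕ using hu.le
  have : NeZero u := ⟨by exact_mod_cast hu.ne'⟩
  have hunit : IsUnit (D : ZMod u) := by
    obtain ⟨x, y, hxy⟩ := hcop
    refine .of_mul_eq_one_right (y : ZMod u) ?_
    simpa using congrArg (Int.cast : ℤ → ZMod u) hxy
  obtain ⟨p, hpB, hp, hpD⟩ := Nat.forall_exists_prime_gt_and_eq_mod hunit (u * B + D.natAbs)
  obtain ⟨q, hq⟩ : (u : ℤ) ∣ p - D :=
    (ZMod.intCast_zmod_eq_zero_iff_dvd _ _).1 (by push_cast; rw [hpD, sub_self])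
  refine ⟨q, ?_, p, hp, by linarith⟩
  have : (u : ℤ) * B < u * q := by
    have : ((u * B + D.natAbs : ℕ) : ℤ) < p := by exact_mod_cast hpB
    push_cast at this
    linarith [le_abs_self D]
  exact lt_of_mul_lt_mul_left this hu.le

lemma exists_natAbs_mul_add_prime {u D : ℤ} (hu : u ≠ 0) (hcop : IsCoprime u D) (B : ℕ) :
    ∃ q : ℤ, B < q ∧ (u * q + D).natAbs.Prime := by
  rcases hu.lt_or_gt with hneg | hpos
  · obtain ⟨q, hq, p, hp, h⟩ := exists_prime_eq_mul_add_of_pos (neg_pos.2 hneg) hcop.neg_neg B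
    refine ⟨q, hq, ?_⟩
    rwa [← Int.natAbs_neg, show -(u * q + D) = p by linarith, Int.natAbs_natCast]
  · obtain ⟨q, hq, p, hp, h⟩ := exists_prime_eq_mul_add_of_pos hpos hcop B
    exact ⟨q, hq, by rwa [h, Int.natAbs_natCast]⟩

lemma exists_card_divisors_mul_add_le {u D : ℤ} (hu : u ≠ 0) (hD : D ≠ 0) (B : ℕ) :
    ∃ q : ℤ, B < q ∧ u * q + D ≠ 0 ∧ (u * q + D).natAbs.divisors.card ≤ 2 * D.natAbs := by
  obtain ⟨g, u, D, hg, hcop, rfl, rfl⟩ := Int.exists_gcd_one' (Int.gcd_pos_of_ne_zero_left D hu)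
  obtain ⟨q, hq, hp⟩ := exists_natAbs_mul_add_prime (left_ne_zero_of_mul hu)
    (Int.isCoprime_iff_gcd_eq_one.2 hcop) B
  have hfactor : (u * g * q + D * g).natAbs = (u * q + D).natAbs * g := by
    rw [show u * g * q + D * g = (u * q + D) * g by ring, Int.natAbs_mul, Int.natAbs_natCast]
  refine ⟨q, hq, ?_, ?_⟩
  · rw [← Int.natAbs_ne_zero, hfactor]
    exact mul_ne_zero hp.ne_zero hg.ne'
  · rw [hfactor, Int.natAbs_mul, Int.natAbs_natCast]
    calc _ ≤ 2 * g := Nat.card_divisors_prime_mul_le hp g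
      _ ≤ 2 * (D.natAbs * g) := by
        have : 0 < D.natAbs := Int.natAbs_pos.2 (left_ne_zero_of_mul hD)
        nlinarith

/-- Sufficiency of Case IV: if `be ≠ 0`, `bf ≠ ec` and `b ∣ c`, then for every infinite
set `A` of positive integers, `|d(A, bn+c) − d(A, en+f)|` is unbounded. -/
theorem caseIV_sufficiency (b c e f : ℤ) (hbe : b * e ≠ 0) (hbf : b * f ≠ e * c)
    (hbc : b ∣ c) :
    ∀ A : Set ℕ, (∀ a ∈ A, 0 < a) → A.Infinite → ∀ K : ℕ, ∃ n : ℕ, 0 < n ∧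
      (K : ℤ) ≤ |(countDiv A (b * n + c) : ℤ) - (countDiv A (e * n + f) : ℤ)| := by
  intro A hApos hAinf K
  obtain ⟨c, rfl⟩ := hbc
  have hD : f - e * c ≠ 0 := fun h => hbf (by linear_combination b * h)
  obtain ⟨S, hSA, hS⟩ := hAinf.exists_subset_card_eq (K + 2 * (f - e * c).natAbs)
  set L := S.lcm id
  have hL : (L : ℤ) ≠ 0 := Int.natCast_ne_zero.2 fun h => by
    obtain ⟨a, ha, ha0⟩ := Finset.lcm_eq_zero_iff.1 h
    exact (hApos a (hSA ha)).ne' ha0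
  obtain ⟨q, hq, hne, hcard⟩ :=
    exists_card_divisors_mul_add_le (mul_ne_zero (right_ne_zero_of_mul hbe) hL) hD c.natAbs
  have hn : c < L * q := by
    have : (1 : ℤ) ≤ L := by omega
    nlinarith [Int.le_natAbs (a := c)]
  refine ⟨(L * q - c).toNat, by omega, ?_⟩
  rw [Int.toNat_of_nonneg (by linarith)]
  have hlow : S.card ≤ countDiv A (b * (L * q - c) + b * c) := by
    rw [show b * (L * q - c) + b * c = b * L * q by ring]
    refine card_le_countDiv hSA ?_ fun a ha => ?_
    · exact mul_ne_zero (mul_ne_zero (left_ne_zero_of_mul hbe) hL) (by omega)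
    · exact ((Int.natCast_dvd_natCast.2 (Finset.dvd_lcm ha)).mul_left b).mul_right q
  have hhigh : countDiv A (e * (L * q - c) + f) ≤ 2 * (f - e * c).natAbs := by
    rw [show e * (L * q - c) + f = e * L * q + (f - e * c) by ring]
    exact (countDiv_le_card_divisors A hne).trans hcard
  exact le_trans (by omega) (le_abs_self _)
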